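/- arXiv:math/0511458 — 4 statements merged into one kernel-verified Lean document; each statement's English description precedes it below -/
import Mathlib

section
/- For any orthonormal vectors v₁, v₂, v₃ in ℝ⁷, one has |φ(v₁, v₂, v₃)| ≤ 1. (That is, the 3-form φ is a calibration on ℝ⁷.) -/
noncomputable section

open scoped InnerProductSpace

/-- The coefficient of `dx_a ∧ dx_b ∧ dx_c` evaluated on `(x, y, z)`:
a `3 × 3` determinant of the corresponding coordinates. -/
def det3 (a b c : Fin 7) (x y z : EuclideanSpace ℝ (Fin 7)) : ℝ :=
  x a * (y b * z c - y c * z b) - x b * (y a * z c - y c * z a) +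
    x c * (y a * z b - y b * z a)

/-- The associative calibration `φ` of Harvey–Lawson on `ℝ⁷` (indices `0,…,6`
corresponding to `x_1,…,x_7`):
`φ = dx₅∧dx₆∧dx₇ − dx₅∧(dx₁∧dx₂ + dx₃∧dx₄) − dx₆∧(dx₁∧dx₃ + dx₄∧dx₂)
   − dx₇∧(dx₁∧dx₄ + dx₂∧dx₃)`. -/
def phi (x y z : EuclideanSpace ℝ (Fin 7)) : ℝ :=
  det3 4 5 6 x y z - det3 4 0 1 x y z - det3 4 2 3 x y z -
    det3 5 0 2 x y z - det3 5 3 1 x y z - det3 6 0 3 x y z - det3 6 1 2 x y z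

/-! The form `φ` is `φ(x, y, z) = ⟪x × y, z⟫` for the seven-dimensional cross product `×`
(the imaginary part of the octonion product), which satisfies the Lagrange identity
`‖x × y‖² = ‖x‖² ‖y‖² - ⟪x, y⟫²`. Cauchy–Schwarz then gives `|φ(x, y, z)| ≤ ‖x‖ ‖y‖ ‖z‖`. -/

def cross7 (x y : EuclideanSpace ℝ (Fin 7)) : EuclideanSpace ℝ (Fin 7) :=
  WithLp.toLp 2
    ![(x 4 * y 1 - x 1 * y 4) + (x 5 * y 2 - x 2 * y 5) + (x 6 * y 3 - x 3 * y 6),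
      (x 0 * y 4 - x 4 * y 0) + (x 3 * y 5 - x 5 * y 3) + (x 6 * y 2 - x 2 * y 6),
      (x 4 * y 3 - x 3 * y 4) + (x 0 * y 5 - x 5 * y 0) + (x 1 * y 6 - x 6 * y 1),
      (x 2 * y 4 - x 4 * y 2) + (x 5 * y 1 - x 1 * y 5) + (x 0 * y 6 - x 6 * y 0),
      (x 5 * y 6 - x 6 * y 5) + (x 1 * y 0 - x 0 * y 1) + (x 3 * y 2 - x 2 * y 3),
      (x 6 * y 4 - x 4 * y 6) + (x 2 * y 0 - x 0 * y 2) + (x 1 * y 3 - x 3 * y 1),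
      (x 4 * y 5 - x 5 * y 4) + (x 3 * y 0 - x 0 * y 3) + (x 2 * y 1 - x 1 * y 2)]

theorem phi_eq_inner_cross7 (x y z : EuclideanSpace ℝ (Fin 7)) :
    phi x y z = ⟪cross7 x y, z⟫_ℝ := by
  simp only [phi, det3, cross7, PiLp.inner_apply, RCLike.inner_apply, conj_trivial,
    Fin.sum_univ_seven, Matrix.cons_val]
  ring

theorem norm_cross7_sq (x y : EuclideanSpace ℝ (Fin 7)) :
    ‖cross7 x y‖ ^ 2 = ‖x‖ ^ 2 * ‖y‖ ^ 2 - ⟪x, y⟫_ℝ ^ 2 := by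
  simp only [EuclideanSpace.norm_sq_eq, Real.norm_eq_abs, sq_abs, cross7, PiLp.inner_apply,
    RCLike.inner_apply, conj_trivial, Fin.sum_univ_seven, Matrix.cons_val]
  ring

theorem norm_cross7_le (x y : EuclideanSpace ℝ (Fin 7)) : ‖cross7 x y‖ ≤ ‖x‖ * ‖y‖ := by
  refine le_of_sq_le_sq ?_ (by positivity)
  rw [norm_cross7_sq, mul_pow]
  exact sub_le_self _ (sq_nonneg _)

theorem abs_phi_le (x y z : EuclideanSpace ℝ (Fin 7)) : |phi x y z| ≤ ‖x‖ * ‖y‖ * ‖z‖ := by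
  rw [phi_eq_inner_cross7]
  calc |⟪cross7 x y, z⟫_ℝ| ≤ ‖cross7 x y‖ * ‖z‖ := abs_real_inner_le_norm _ _
    _ ≤ ‖x‖ * ‖y‖ * ‖z‖ := by gcongr; exact norm_cross7_le x y

/-- The 3-form `φ` is a calibration: `|φ(v₁, v₂, v₃)| ≤ 1` for any orthonormal
vectors `v₁, v₂, v₃` in `ℝ⁷`. -/
theorem abs_phi_le_one_of_orthonormal (v : Fin 3 → EuclideanSpace ℝ (Fin 7))
    (hv : Orthonormal ℝ v) : |phi (v 0) (v 1) (v 2)| ≤ 1 := by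
  simpa [hv.1] using abs_phi_le (v 0) (v 1) (v 2)
end
end

section
/- Let v₁, v₂, v₃, v₄ be orthonormal vectors in ℝ⁷. Then |ψ(v₁, v₂, v₃, v₄)| = 1 if and only if φ(vᵢ, vⱼ, v_k) = 0 for all i, j, k ∈ {1, 2, 3, 4}. (Pointwise form of the lemma that an oriented 4-plane is coassociative, for a suitable orientation, if and only if φ vanishes on it.) -/
/-!
Let `x × y` be the cross product on `ℝ⁷` dual to `φ`, i.e. `⟪x × y, z⟫ = φ(x, y, z)`. For
orthonormal `v₀, …, v₃` the vectors `a = v₀ × v₁` and `b = v₂ × v₃` are unit vectors with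
`⟪a, b⟫ = ψ(v₀, v₁, v₂, v₃)`, and the `G₂` identity for `(x × y) × (z × w)` shows that
`a × b = -φ(v₁,v₂,v₃) v₀ + φ(v₀,v₂,v₃) v₁ + φ(v₀,v₁,v₃) v₂ - φ(v₀,v₁,v₂) v₃`.
Lagrange's identity `‖a × b‖² = ‖a‖² ‖b‖² - ⟪a, b⟫²` then reads
`ψ² + ∑_{i<j<k} φ(vᵢ, vⱼ, vₖ)² = 1`; since `φ` is alternating, the increasing triples
control all the others.
-/

noncomputable section

open scoped InnerProductSpace

/-- `4 × 4` determinant of coordinates `a, b, c, d` of `(x, y, z, w)`. -/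
def det4 (a b c d : Fin 7) (x y z w : EuclideanSpace ℝ (Fin 7)) : ℝ :=
  x a * det3 b c d y z w - x b * det3 a c d y z w +
    x c * det3 a b d y z w - x d * det3 a b c y z w

/-- The coassociative calibration `ψ = ∗φ` on `ℝ⁷`. -/
def psi (x y z w : EuclideanSpace ℝ (Fin 7)) : ℝ :=
  det4 0 1 2 3 x y z w - det4 0 1 5 6 x y z w - det4 2 3 5 6 x y z w -
    det4 0 2 6 4 x y z w - det4 3 1 6 4 x y z w - det4 0 3 4 5 x y z w -
    det4 1 2 4 5 x y z w

namespace G2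

open EuclideanSpace

local notation "ℝ⁷" => EuclideanSpace ℝ (Fin 7)

theorem phi_swap_left (x y z : ℝ⁷) : phi y x z = -phi x y z := by
  simp only [phi, det3]; ring

theorem phi_swap_right (x y z : ℝ⁷) : phi x z y = -phi x y z := by
  simp only [phi, det3]; ring

theorem phi_self_left (x z : ℝ⁷) : phi x x z = 0 := by
  simp only [phi, det3]; ring

theorem phi_self_right (x y : ℝ⁷) : phi x y y = 0 := by
  simp only [phi, det3]; ring

theorem phi_self_outer (x y : ℝ⁷) : phi x y x = 0 := by
  simp only [phi, det3]; ring

theorem phi_eq_zero_of_forall_lt {ι : Type*} [LinearOrder ι] {v : ι → ℝ⁷}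
    (h : ∀ i j k, i < j → j < k → phi (v i) (v j) (v k) = 0) (i j k : ι) :
    phi (v i) (v j) (v k) = 0 := by
  rcases lt_trichotomy i j with hij | rfl | hji
  · rcases lt_trichotomy j k with hjk | rfl | hkj
    · exact h i j k hij hjk
    · exact phi_self_right _ _
    rcases lt_trichotomy i k with hik | rfl | hki
    · rw [phi_swap_right, h i k j hik hkj, neg_zero]
    · exact phi_self_outer _ _
    · rw [phi_swap_right, phi_swap_left, neg_neg, h k i j hki hij]
  · exact phi_self_left _ _
  rcases lt_trichotomy i k with hik | rfl | hki
  · rw [phi_swap_left, h j i k hji hik, neg_zero]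
  · exact phi_self_outer _ _
  rcases lt_trichotomy j k with hjk | rfl | hkj
  · rw [phi_swap_left, phi_swap_right, neg_neg, h j k i hjk hki]
  · exact phi_self_right _ _
  · rw [phi_swap_left, phi_swap_right, phi_swap_left, h k j i hkj hji, neg_zero, neg_zero,
      neg_zero]

def cross (x y : ℝ⁷) : ℝ⁷ :=
  WithLp.toLp 2 fun k => phi x y (single k 1)

theorem inner_eq_coords (x y : ℝ⁷) :
    ⟪x, y⟫_ℝ =
      x 0 * y 0 + x 1 * y 1 + x 2 * y 2 + x 3 * y 3 + x 4 * y 4 + x 5 * y 5 + x 6 * y 6 := by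
  simp only [PiLp.inner_apply, RCLike.inner_apply, conj_trivial, Fin.sum_univ_seven]; ring

theorem inner_cross_self (x y : ℝ⁷) :
    ⟪cross x y, cross x y⟫_ℝ = ⟪x, x⟫_ℝ * ⟪y, y⟫_ℝ - ⟪x, y⟫_ℝ ^ 2 := by
  simp only [inner_eq_coords, cross, phi, det3, Fin.isValue, PiLp.single_apply, Fin.reduceEq,
    ↓reduceIte]
  ring

theorem inner_cross_cross (x y z w : ℝ⁷) :
    ⟪cross x y, cross z w⟫_ℝ = psi x y z w + ⟪x, z⟫_ℝ * ⟪y, w⟫_ℝ - ⟪x, w⟫_ℝ * ⟪y, z⟫_ℝ := by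
  simp only [inner_eq_coords, cross, phi, psi, det4, det3, Fin.isValue, PiLp.single_apply,
    Fin.reduceEq, ↓reduceIte]
  ring

set_option maxHeartbeats 400000 in
theorem cross_cross_cross (x y z w : ℝ⁷) :
    cross (cross x y) (cross z w) =
      -phi y z w • x + phi x z w • y + phi x y w • z - phi x y z • w
        - ⟪x, z⟫_ℝ • cross y w + ⟪x, w⟫_ℝ • cross y z + ⟪y, z⟫_ℝ • cross x w
        - ⟪y, w⟫_ℝ • cross x z := by
  ext k
  simp only [inner_eq_coords]
  fin_cases k <;> simp [cross, phi, det3, PiLp.single_apply] <;> ring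

theorem psi_sq_add_phi_sq_eq_one {v : Fin 4 → ℝ⁷} (hv : Orthonormal ℝ v) :
    psi (v 0) (v 1) (v 2) (v 3) ^ 2 + phi (v 0) (v 1) (v 2) ^ 2 + phi (v 0) (v 1) (v 3) ^ 2 +
      phi (v 0) (v 2) (v 3) ^ 2 + phi (v 1) (v 2) (v 3) ^ 2 = 1 := by
  have hinner := orthonormal_iff_ite.mp hv
  set a := cross (v 0) (v 1)
  set b := cross (v 2) (v 3)
  have ha : ⟪a, a⟫_ℝ = 1 := by rw [inner_cross_self]; simp [hinner, hv.norm_eq_one]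
  have hb : ⟪b, b⟫_ℝ = 1 := by rw [inner_cross_self]; simp [hinner, hv.norm_eq_one]
  have hab : ⟪a, b⟫_ℝ = psi (v 0) (v 1) (v 2) (v 3) := by simp [a, b, inner_cross_cross, hinner]
  have hab_cross : cross a b = ∑ i, ![-phi (v 1) (v 2) (v 3), phi (v 0) (v 2) (v 3),
      phi (v 0) (v 1) (v 3), -phi (v 0) (v 1) (v 2)] i • v i := by
    simp only [a, b, cross_cross_cross, hinner, Fin.reduceEq, ↓reduceIte, zero_smul, sub_zero,
      add_zero, Fin.sum_univ_four, Matrix.cons_val]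
    module
  have lagrange := inner_cross_self a b
  rw [ha, hb, hab, hab_cross, hv.inner_sum] at lagrange
  simp only [Fin.sum_univ_four, Matrix.cons_val, conj_trivial] at lagrange
  linear_combination lagrange

end G2

/-- For orthonormal `v₁, v₂, v₃, v₄` in `ℝ⁷`, `|ψ(v₁, v₂, v₃, v₄)| = 1` iff
`φ` vanishes on all triples of vectors from `{v₁, v₂, v₃, v₄}`: the pointwise
form of the lemma that an oriented 4-plane is coassociative (for a suitable
orientation) iff `φ` vanishes on it. -/
theorem abs_psi_eq_one_iff_phi_vanishes (v : Fin 4 → EuclideanSpace ℝ (Fin 7))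
    (hv : Orthonormal ℝ v) :
    |psi (v 0) (v 1) (v 2) (v 3)| = 1 ↔
      ∀ i j k : Fin 4, phi (v i) (v j) (v k) = 0 := by
  have key := G2.psi_sq_add_phi_sq_eq_one hv
  constructor
  · intro h
    rw [← sq_abs, h] at key
    have h012 : phi (v 0) (v 1) (v 2) = 0 := by nlinarith
    have h013 : phi (v 0) (v 1) (v 3) = 0 := by nlinarith
    have h023 : phi (v 0) (v 2) (v 3) = 0 := by nlinarith
    have h123 : phi (v 1) (v 2) (v 3) = 0 := by nlinarith
    refine G2.phi_eq_zero_of_forall_lt fun i j k hij hjk => ?_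
    fin_cases i <;> fin_cases j <;> fin_cases k <;> simp_all
  · intro h
    rw [h, h, h, h] at key
    rw [← abs_one, ← sq_eq_sq_iff_abs_eq_abs]
    linarith
end
end

section
/- For any two unit vectors u, u′ ∈ ℝ⁷ there exists a linear isometry g of ℝ⁷ satisfying φ(g x, g y, g z) = φ(x, y, z) for all x, y, z ∈ ℝ⁷ and g u = u′. (The stabilizer G₂ of φ acts transitively on the unit sphere S⁶; its orbits on ℝ⁷ are the origin and the spheres centered at the origin.) -/
noncomputable section

open scoped InnerProductSpace

/-!
`G₂` contains an `SO(4)` acting on `ℝ⁷ = ℝ⁴ ⊕ ℝ³` (coordinates `x₁ … x₄` and `x₅ x₆ x₇`): unit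
quaternions act on `ℝ⁴` alone, and rotating a coordinate plane of `ℝ³` by an angle `2α` preserves
`φ` once it is coupled with suitable rotations of `ℝ⁴` by `α`. Two such rotations carry the
`ℝ³`-component of a unit vector to the `e₅`-axis, a quaternion then carries its `ℝ⁴`-component to
the `e₁`-axis, and a conjugate rotation in the `(e₁, e₅)`-plane moves the result to `e₅`.

Lean's coordinate `i` is `x_{i+1}`; in particular `e₅` is `EuclideanSpace.single 4 1`.
-/

open Real

local notation "ℝ⁷" => EuclideanSpace ℝ (Fin 7)

theorem Matrix.toEuclideanLin_apply_eq_sum {n : Type*} [Fintype n] [DecidableEq n]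
    (M : Matrix n n ℝ) (x : EuclideanSpace ℝ n) (i : n) :
    M.toEuclideanLin x i = ∑ j, M i j * x j := by
  simp [Matrix.toLpLin_apply, Matrix.mulVec, dotProduct]

theorem exists_polar_half_angle (a b : ℝ) :
    ∃ h t : ℝ, h ^ 2 + t ^ 2 = 1 ∧
      a = √(a ^ 2 + b ^ 2) * (h ^ 2 - t ^ 2) ∧ b = √(a ^ 2 + b ^ 2) * (2 * h * t) := by
  have hz : ‖(⟨a, b⟩ : ℂ)‖ = √(a ^ 2 + b ^ 2) := by
    rw [Complex.norm_def, Complex.normSq_apply]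
    ring_nf
  have hcos := Complex.norm_mul_cos_arg ⟨a, b⟩
  have hsin := Complex.norm_mul_sin_arg ⟨a, b⟩
  set θ := Complex.arg ⟨a, b⟩ / 2
  rw [show Complex.arg ⟨a, b⟩ = 2 * θ by ring, hz] at hcos hsin
  rw [cos_two_mul'] at hcos
  rw [sin_two_mul] at hsin
  exact ⟨cos θ, sin θ, cos_sq_add_sin_sq θ, hcos.symm, by linear_combination -hsin⟩

theorem exists_unit_smul_four (a b c d : ℝ) :
    ∃ s p₀ p₁ p₂ p₃ : ℝ, p₀ ^ 2 + p₁ ^ 2 + p₂ ^ 2 + p₃ ^ 2 = 1 ∧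
      a = s * p₀ ∧ b = s * p₁ ∧ c = s * p₂ ∧ d = s * p₃ := by
  set s := √(a ^ 2 + b ^ 2 + c ^ 2 + d ^ 2)
  rcases eq_or_ne s 0 with hs | hs
  · have h0 : a ^ 2 + b ^ 2 + c ^ 2 + d ^ 2 = 0 := by
      rwa [Real.sqrt_eq_zero (by positivity)] at hs
    refine ⟨0, 1, 0, 0, 0, by norm_num, ?_, ?_, ?_, ?_⟩ <;> nlinarith
  · have hs2 : s ^ 2 = a ^ 2 + b ^ 2 + c ^ 2 + d ^ 2 := Real.sq_sqrt (by positivity)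
    refine ⟨s, a / s, b / s, c / s, d / s, ?_, ?_, ?_, ?_, ?_⟩ <;> field_simp
    linear_combination -hs2

def G2 : Subgroup (ℝ⁷ ≃ₗᵢ[ℝ] ℝ⁷) where
  carrier := {g | ∀ x y z, phi (g x) (g y) (g z) = phi x y z}
  mul_mem' {g g'} hg hg' x y z := by
    simp only [LinearIsometryEquiv.coe_mul, Function.comp_apply]
    rw [hg, hg']
  one_mem' _ _ _ := rfl
  inv_mem' {g} hg x y z := by simpa using (hg (g⁻¹ x) (g⁻¹ y) (g⁻¹ z)).symm

theorem exists_mem_G2_coe_eq (f : ℝ⁷ →ₗ[ℝ] ℝ⁷) (hf : ∀ x y, ⟪f x, f y⟫_ℝ = ⟪x, y⟫_ℝ)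
    (hφ : ∀ x y z, phi (f x) (f y) (f z) = phi x y z) : ∃ g ∈ G2, ⇑g = f :=
  ⟨(f.isometryOfInner hf).toLinearIsometryEquiv rfl, hφ, rfl⟩

/-- `x ↦ x * star q` for the quaternion `q = a + b i + c j + d k`, on the first four coordinates. -/
def quatMul (a b c d : ℝ) : Matrix (Fin 7) (Fin 7) ℝ :=
  !![ a,  b, c,  d, 0, 0, 0;
     -b,  a, -d, c, 0, 0, 0;
     -c,  d, a, -b, 0, 0, 0;
     -d, -c, b,  a, 0, 0, 0;
      0,  0, 0,  0, 1, 0, 0;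
      0,  0, 0,  0, 0, 1, 0;
      0,  0, 0,  0, 0, 0, 1]

/- `rotij h t` turns the `(i, j)`-plane by the angle `-2α`, where `(h, t) = (cos α, sin α)`, so it
maps `r • ((h ^ 2 - t ^ 2) • eᵢ + (2 * h * t) • eⱼ)` to `r • eᵢ`; the rotations by `±α` of two
further coordinate planes make it preserve `φ`. -/

def rot45 (h t : ℝ) : Matrix (Fin 7) (Fin 7) ℝ :=
  !![ h,  0, 0, t, 0, 0, 0;
      0,  h, t, 0, 0, 0, 0;
      0, -t, h, 0, 0, 0, 0;
     -t,  0, 0, h, 0, 0, 0;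
      0,  0, 0, 0, h ^ 2 - t ^ 2, 2 * h * t, 0;
      0,  0, 0, 0, -(2 * h * t), h ^ 2 - t ^ 2, 0;
      0,  0, 0, 0, 0, 0, 1]

def rot46 (h t : ℝ) : Matrix (Fin 7) (Fin 7) ℝ :=
  !![h,  0, -t, 0, 0, 0, 0;
     0,  h,  0, t, 0, 0, 0;
     t,  0,  h, 0, 0, 0, 0;
     0, -t,  0, h, 0, 0, 0;
     0,  0,  0, 0, h ^ 2 - t ^ 2, 0, 2 * h * t;
     0,  0,  0, 0, 0, 1, 0;
     0,  0,  0, 0, -(2 * h * t), 0, h ^ 2 - t ^ 2]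

def rot40 (h t : ℝ) : Matrix (Fin 7) (Fin 7) ℝ :=
  !![h ^ 2 - t ^ 2, 0, 0,  0, -(2 * h * t), 0,  0;
     0,             1, 0,  0, 0,            0,  0;
     0,             0, h,  0, 0,            0, -t;
     0,             0, 0,  h, 0,            t,  0;
     2 * h * t,     0, 0,  0, h ^ 2 - t ^ 2, 0, 0;
     0,             0, 0, -t, 0,            h,  0;
     0,             0, t,  0, 0,            0,  h]

theorem exists_mem_G2_coe_eq_quatMul {a b c d : ℝ} (h : a ^ 2 + b ^ 2 + c ^ 2 + d ^ 2 = 1) :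
    ∃ g ∈ G2, ⇑g = (quatMul a b c d).toEuclideanLin := by
  refine exists_mem_G2_coe_eq _ (fun x y => ?_) (fun x y z => ?_)
  · simp only [quatMul, PiLp.inner_apply, RCLike.inner_apply, conj_trivial,
      Matrix.toEuclideanLin_apply_eq_sum, Fin.sum_univ_seven, Matrix.of_apply, Matrix.cons_val]
    grind
  · simp only [quatMul, phi, det3, Matrix.toEuclideanLin_apply_eq_sum, Fin.sum_univ_seven,
      Matrix.of_apply, Matrix.cons_val]
    grind

theorem exists_mem_G2_coe_eq_rot45 {h t : ℝ} (hht : h ^ 2 + t ^ 2 = 1) :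
    ∃ g ∈ G2, ⇑g = (rot45 h t).toEuclideanLin := by
  refine exists_mem_G2_coe_eq _ (fun x y => ?_) (fun x y z => ?_)
  · simp only [rot45, PiLp.inner_apply, RCLike.inner_apply, conj_trivial,
      Matrix.toEuclideanLin_apply_eq_sum, Fin.sum_univ_seven, Matrix.of_apply, Matrix.cons_val]
    grind
  · simp only [rot45, phi, det3, Matrix.toEuclideanLin_apply_eq_sum, Fin.sum_univ_seven,
      Matrix.of_apply, Matrix.cons_val]
    grind

theorem exists_mem_G2_coe_eq_rot46 {h t : ℝ} (hht : h ^ 2 + t ^ 2 = 1) :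
    ∃ g ∈ G2, ⇑g = (rot46 h t).toEuclideanLin := by
  refine exists_mem_G2_coe_eq _ (fun x y => ?_) (fun x y z => ?_)
  · simp only [rot46, PiLp.inner_apply, RCLike.inner_apply, conj_trivial,
      Matrix.toEuclideanLin_apply_eq_sum, Fin.sum_univ_seven, Matrix.of_apply, Matrix.cons_val]
    grind
  · simp only [rot46, phi, det3, Matrix.toEuclideanLin_apply_eq_sum, Fin.sum_univ_seven,
      Matrix.of_apply, Matrix.cons_val]
    grind

theorem exists_mem_G2_coe_eq_rot40 {h t : ℝ} (hht : h ^ 2 + t ^ 2 = 1) :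
    ∃ g ∈ G2, ⇑g = (rot40 h t).toEuclideanLin := by
  refine exists_mem_G2_coe_eq _ (fun x y => ?_) (fun x y z => ?_)
  · simp only [rot40, PiLp.inner_apply, RCLike.inner_apply, conj_trivial,
      Matrix.toEuclideanLin_apply_eq_sum, Fin.sum_univ_seven, Matrix.of_apply, Matrix.cons_val]
    grind
  · simp only [rot40, phi, det3, Matrix.toEuclideanLin_apply_eq_sum, Fin.sum_univ_seven,
      Matrix.of_apply, Matrix.cons_val]
    grind

theorem exists_mem_G2_apply_five_eq_zero (v : ℝ⁷) : ∃ g ∈ G2, g v 5 = 0 ∧ g v 6 = v 6 := by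
  obtain ⟨h, t, hht, h4, h5⟩ := exists_polar_half_angle (v 4) (v 5)
  obtain ⟨g, hg, hg_eq⟩ := exists_mem_G2_coe_eq_rot45 hht
  refine ⟨g, hg, ?_, ?_⟩ <;>
    simp only [hg_eq, rot45, Matrix.toEuclideanLin_apply_eq_sum, Fin.sum_univ_seven,
      Matrix.of_apply, Matrix.cons_val]
  · linear_combination (-(2 * h * t)) * h4 + (h ^ 2 - t ^ 2) * h5
  · ring

theorem exists_mem_G2_apply_six_eq_zero (v : ℝ⁷) : ∃ g ∈ G2, g v 5 = v 5 ∧ g v 6 = 0 := by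
  obtain ⟨h, t, hht, h4, h6⟩ := exists_polar_half_angle (v 4) (v 6)
  obtain ⟨g, hg, hg_eq⟩ := exists_mem_G2_coe_eq_rot46 hht
  refine ⟨g, hg, ?_, ?_⟩ <;>
    simp only [hg_eq, rot46, Matrix.toEuclideanLin_apply_eq_sum, Fin.sum_univ_seven,
      Matrix.of_apply, Matrix.cons_val]
  · ring
  · linear_combination (-(2 * h * t)) * h4 + (h ^ 2 - t ^ 2) * h6

theorem exists_mem_G2_apply_one_two_three_eq_zero (v : ℝ⁷) :
    ∃ g ∈ G2, g v 1 = 0 ∧ g v 2 = 0 ∧ g v 3 = 0 ∧ g v 4 = v 4 ∧ g v 5 = v 5 ∧ g v 6 = v 6 := by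
  obtain ⟨s, a, b, c, d, habcd, h0, h1, h2, h3⟩ := exists_unit_smul_four (v 0) (v 1) (v 2) (v 3)
  obtain ⟨g, hg, hg_eq⟩ := exists_mem_G2_coe_eq_quatMul habcd
  refine ⟨g, hg, ?_, ?_, ?_, ?_, ?_, ?_⟩ <;>
    simp only [hg_eq, quatMul, Matrix.toEuclideanLin_apply_eq_sum, Fin.sum_univ_seven,
      Matrix.of_apply, Matrix.cons_val, h0, h1, h2, h3] <;>
    ring

theorem exists_mem_G2_apply_eq_single_four (v : ℝ⁷) (h1 : v 1 = 0) (h2 : v 2 = 0)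
    (h3 : v 3 = 0) (h5 : v 5 = 0) (h6 : v 6 = 0) (hv : ‖v‖ = 1) :
    ∃ g ∈ G2, g v = EuclideanSpace.single 4 1 := by
  have hv2 : v 4 ^ 2 + v 0 ^ 2 = 1 := by
    have := EuclideanSpace.real_norm_sq_eq v
    simp only [hv, Fin.sum_univ_seven, h1, h2, h3, h5, h6] at this
    linear_combination -this
  obtain ⟨h, t, hht, h4, h0⟩ := exists_polar_half_angle (v 4) (v 0)
  rw [hv2, sqrt_one, one_mul] at h4 h0
  obtain ⟨g, hg, hg_eq⟩ := exists_mem_G2_coe_eq_rot40 hht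
  refine ⟨g, hg, ?_⟩
  ext i
  fin_cases i <;>
    simp only [hg_eq, rot40, Fin.reduceFinMk, Fin.isValue, Matrix.toEuclideanLin_apply_eq_sum,
      Fin.sum_univ_seven, Matrix.of_apply, Matrix.cons_val', Matrix.cons_val, PiLp.single_apply,
      h0, h1, h2, h3, h4, h5, h6] <;>
    grind

theorem exists_mem_G2_apply_eq_single_four_of_norm_eq_one (u : ℝ⁷) (hu : ‖u‖ = 1) :
    ∃ g ∈ G2, g u = EuclideanSpace.single 4 1 := by
  obtain ⟨g₁, hg₁, h15, h16⟩ := exists_mem_G2_apply_five_eq_zero u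
  obtain ⟨g₂, hg₂, h25, h26⟩ := exists_mem_G2_apply_six_eq_zero (g₁ u)
  obtain ⟨g₃, hg₃, h31, h32, h33, -, h35, h36⟩ :=
    exists_mem_G2_apply_one_two_three_eq_zero (g₂ (g₁ u))
  obtain ⟨g₄, hg₄, h4⟩ := exists_mem_G2_apply_eq_single_four (g₃ (g₂ (g₁ u))) h31 h32 h33
    (by rw [h35, h25, h15]) (by rw [h36, h26]) (by simp only [LinearIsometryEquiv.norm_map, hu])
  exact ⟨g₄ * g₃ * g₂ * g₁, G2.mul_mem (G2.mul_mem (G2.mul_mem hg₄ hg₃) hg₂) hg₁, h4⟩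

/-- The stabilizer `G₂` of `φ` acts transitively on the unit sphere `S⁶`:
for any two unit vectors `u, u′` there is a linear isometry of `ℝ⁷`
preserving `φ` and carrying `u` to `u′`. -/
theorem G2_transitive_on_sphere (u u' : EuclideanSpace ℝ (Fin 7))
    (hu : ‖u‖ = 1) (hu' : ‖u'‖ = 1) :
    ∃ g : EuclideanSpace ℝ (Fin 7) ≃ₗᵢ[ℝ] EuclideanSpace ℝ (Fin 7),
      (∀ x y z, phi (g x) (g y) (g z) = phi x y z) ∧ g u = u' := by
  obtain ⟨g, hg, hgu⟩ := exists_mem_G2_apply_eq_single_four_of_norm_eq_one u hu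
  obtain ⟨g', hg', hgu'⟩ := exists_mem_G2_apply_eq_single_four_of_norm_eq_one u' hu'
  refine ⟨g'⁻¹ * g, G2.mul_mem (G2.inv_mem hg') hg, ?_⟩
  rw [LinearIsometryEquiv.coe_mul, Function.comp_apply, hgu, ← hgu']
  exact g'.symm_apply_apply u'
end
end

section
/- Let v ∈ ℝ⁷ be a unit vector and let V be a 4-dimensional linear subspace of the hyperplane v^⊥ on which φ vanishes identically (i.e. φ(x, y, z) = 0 for all x, y, z ∈ V). Then V is invariant under the complex structure J_v(u) = u × v on v^⊥: for every x ∈ V, x × v ∈ V. (Linear-algebra form of the fact that a coassociative 4-plane contained in a hyperplane is a complex 2-plane for the induced SU(3)-structure.) -/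
noncomputable section

open scoped InnerProductSpace

lemma phi_add_snd (x y y' z : EuclideanSpace ℝ (Fin 7)) :
    phi x (y + y') z = phi x y z + phi x y' z := by
  simp only [phi, det3, PiLp.add_apply]; ring

lemma phi_smul_snd (x : EuclideanSpace ℝ (Fin 7)) (a : ℝ) (y z : EuclideanSpace ℝ (Fin 7)) :
    phi x (a • y) z = a * phi x y z := by
  simp only [phi, det3, PiLp.smul_apply, smul_eq_mul]; ring

set_option maxHeartbeats 1000000 in
/-- The fundamental double cross product identity, in inner product form. -/
lemma double_cross_inner
    (cross : EuclideanSpace ℝ (Fin 7) → EuclideanSpace ℝ (Fin 7) → EuclideanSpace ℝ (Fin 7))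
    (hcross : ∀ x y z, ⟪cross x y, z⟫_ℝ = phi x y z) (x y z : EuclideanSpace ℝ (Fin 7)) :
    ⟪cross x (cross x y), z⟫_ℝ = ⟪x, y⟫_ℝ * ⟪x, z⟫_ℝ - ⟪x, x⟫_ℝ * ⟪y, z⟫_ℝ := by
  have hc : ∀ j : Fin 7, cross x y j = phi x y (EuclideanSpace.single j 1) := by
    intro j
    rw [← hcross, EuclideanSpace.inner_single_right]; simp
  have e : ∀ j : Fin 7, ∃ r : ℝ, phi x y (EuclideanSpace.single j 1) = r := fun j => ⟨_, rfl⟩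
  obtain ⟨c0, h0⟩ := e 0; obtain ⟨c1, h1⟩ := e 1; obtain ⟨c2, h2⟩ := e 2
  obtain ⟨c3, h3⟩ := e 3; obtain ⟨c4, h4⟩ := e 4; obtain ⟨c5, h5⟩ := e 5
  obtain ⟨c6, h6⟩ := e 6
  rw [hcross]
  simp only [phi, det3]
  rw [hc 0, hc 1, hc 2, hc 3, hc 4, hc 5, hc 6, h0, h1, h2, h3, h4, h5, h6]
  simp only [phi, det3, EuclideanSpace.single_apply] at h0 h1 h2 h3 h4 h5 h6
  simp at h0 h1 h2 h3 h4 h5 h6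
  subst h0 h1 h2 h3 h4 h5 h6
  simp only [PiLp.inner_apply, RCLike.inner_apply, conj_trivial, Fin.sum_univ_seven]
  ring

/-- The double cross product identity in vector form. -/
lemma double_cross
    (cross : EuclideanSpace ℝ (Fin 7) → EuclideanSpace ℝ (Fin 7) → EuclideanSpace ℝ (Fin 7))
    (hcross : ∀ x y z, ⟪cross x y, z⟫_ℝ = phi x y z) (x y : EuclideanSpace ℝ (Fin 7)) :
    cross x (cross x y) = ⟪x, y⟫_ℝ • x - (‖x‖ ^ 2) • y := by
  apply ext_inner_right ℝ
  intro z
  rw [double_cross_inner cross hcross, inner_sub_left, real_inner_smul_left,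
    real_inner_smul_left, ← real_inner_self_eq_norm_sq]

/-- Let `v` be a unit vector and `V ⊆ v^⊥` a 4-dimensional subspace on which
`φ` vanishes identically.  Then `V` is invariant under the complex structure
`J_v(u) = u × v` on `v^⊥`, where `×` is the cross product determined by
`⟪x × y, z⟫ = φ(x, y, z)`: for every `x ∈ V`, `x × v ∈ V`.  (A coassociative
4-plane contained in a hyperplane is a complex 2-plane for the induced
`SU(3)`-structure.) -/
theorem coassociative_plane_in_hyperplane_complex
    (cross : EuclideanSpace ℝ (Fin 7) → EuclideanSpace ℝ (Fin 7) →
      EuclideanSpace ℝ (Fin 7))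
    (hcross : ∀ x y z, ⟪cross x y, z⟫_ℝ = phi x y z)
    (v : EuclideanSpace ℝ (Fin 7)) (hv : ‖v‖ = 1)
    (V : Submodule ℝ (EuclideanSpace ℝ (Fin 7)))
    (hdim : Module.finrank ℝ V = 4)
    (hperp : ∀ x ∈ V, ⟪x, v⟫_ℝ = 0)
    (hphi : ∀ x ∈ V, ∀ y ∈ V, ∀ z ∈ V, phi x y z = 0) :
    ∀ x ∈ V, cross x v ∈ V := by

  intro x hx
  by_cases hx0 : x = 0
  · subst hx0
    have h0 : cross 0 v = 0 := by
      apply ext_inner_right ℝ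
      intro z
      rw [hcross, inner_zero_left]
      simp [phi, det3]
    rw [h0]; exact V.zero_mem
  -- the subspace `U = V ∩ x^⊥`
  set U : Submodule ℝ (EuclideanSpace ℝ (Fin 7)) := V ⊓ (ℝ ∙ x)ᗮ with hU
  have hcV : ∀ y ∈ U, cross x y ∈ Vᗮ := by
    intro y hy
    rw [Submodule.mem_orthogonal]
    intro u hu
    rw [real_inner_comm, hcross]
    exact hphi x hx y hy.1 u hu
  -- the linear map `y ↦ x × y` from `U` to `V^⊥`
  have hadd : ∀ y y', cross x (y + y') = cross x y + cross x y' := by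
    intro y y'
    apply ext_inner_right ℝ
    intro z
    rw [hcross, inner_add_left, hcross, hcross, phi_add_snd]
  have hsmul : ∀ (a : ℝ) y, cross x (a • y) = a • cross x y := by
    intro a y
    apply ext_inner_right ℝ
    intro z
    rw [hcross, real_inner_smul_left, hcross, phi_smul_snd]
  let S : U →ₗ[ℝ] Vᗮ :=
    { toFun := fun y => ⟨cross x y.1, hcV y.1 y.2⟩
      map_add' := fun y y' => Subtype.ext (hadd y.1 y'.1)
      map_smul' := fun a y => Subtype.ext (hsmul a y.1) }
  -- `S` is injective
  have hSinj : Function.Injective S := by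
    rw [injective_iff_map_eq_zero]
    intro y hy
    have h1 : cross x y.1 = 0 := congrArg Subtype.val hy
    have h2 : cross x (cross x y.1) = 0 := by
      rw [h1]
      apply ext_inner_right ℝ
      intro z
      rw [hcross, inner_zero_left]
      simp [phi, det3]
    rw [double_cross cross hcross] at h2
    have hxy : ⟪x, y.1⟫_ℝ = 0 := y.2.2 x (Submodule.mem_span_singleton_self x)
    rw [hxy, zero_smul, zero_sub, neg_eq_zero, smul_eq_zero] at h2
    have : y.1 = 0 := by
      rcases h2 with h | h
      · exact absurd (pow_eq_zero_iff two_ne_zero |>.mp h) (norm_ne_zero_iff.mpr hx0)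
      · exact h
    exact Subtype.ext this
  -- dimension count
  have hfr : Module.finrank ℝ (EuclideanSpace ℝ (Fin 7)) = 7 := by simp
  have hVperp : Module.finrank ℝ Vᗮ = 3 := by
    have := Submodule.finrank_add_finrank_orthogonal (K := V)
    rw [hdim, hfr] at this
    omega
  have hxspan : Module.finrank ℝ (ℝ ∙ x) = 1 := finrank_span_singleton hx0
  have hxperp : Module.finrank ℝ ((ℝ ∙ x)ᗮ) = 6 := by
    have := Submodule.finrank_add_finrank_orthogonal (K := ℝ ∙ x)
    rw [hxspan, hfr] at this
    omega
  have hUge : 3 ≤ Module.finrank ℝ U := by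
    have hsum := Submodule.finrank_sup_add_finrank_inf_eq V ((ℝ ∙ x)ᗮ)
    have hle : Module.finrank ℝ ↥(V ⊔ (ℝ ∙ x)ᗮ) ≤ 7 := by
      have h := Submodule.finrank_le (V ⊔ (ℝ ∙ x)ᗮ)
      rwa [hfr] at h
    rw [hdim, hxperp] at hsum
    show 3 ≤ Module.finrank ℝ ↥(V ⊓ (ℝ ∙ x)ᗮ)
    omega
  have hUle : Module.finrank ℝ U ≤ 3 := hVperp ▸ LinearMap.finrank_le_finrank_of_injective hSinj
  have hUeq : Module.finrank ℝ U = Module.finrank ℝ Vᗮ := by omega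
  have hSsurj : Function.Surjective S :=
    (LinearMap.injective_iff_surjective_of_finrank_eq_finrank hUeq).mp hSinj
  -- pull back `v`
  have hvV : v ∈ Vᗮ := by
    rw [Submodule.mem_orthogonal]
    intro u hu
    exact hperp u hu
  obtain ⟨y, hy⟩ := hSsurj ⟨v, hvV⟩
  have hyv : cross x y.1 = v := congrArg Subtype.val hy
  have hxy : ⟪x, y.1⟫_ℝ = 0 := y.2.2 x (Submodule.mem_span_singleton_self x)
  rw [← hyv, double_cross cross hcross, hxy, zero_smul, zero_sub]
  exact Submodule.neg_mem V (Submodule.smul_mem V _ y.2.1)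
end
end
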